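/- arXiv:1601.06435 — 4 statements merged into one kernel-verified Lean document; each statement's English description precedes it below -/
import Mathlib

section
/- Let θ ∈ [0,1] be irrational and α ≥ 1. Set A_α(θ) = limsup_{n→∞} aₙ qₙ₋₁^{1-α}, where aₙ are the continued fraction entries of θ and qₙ the continued fraction denominators. Then A_α(θ) < ∞ if and only if A_α(1-θ) < ∞, and A_α(θ) > 0 if and only if A_α(1-θ) > 0. -/
open Filter Topology MeasureTheory

namespace CFPaper

/-- Continued fraction denominators: `q 0 = 1`, `q 1 = a 1`, `q (n+2) = a (n+2) * q (n+1) + q n`. -/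
def cfQ (a : ℕ → ℕ) : ℕ → ℕ
  | 0 => 1
  | 1 => a 1
  | (n+2) => a (n+2) * cfQ a (n+1) + cfQ a n

/-- Continued fraction numerators. -/
def cfP (a : ℕ → ℕ) : ℕ → ℕ
  | 0 => 0
  | 1 => 1
  | (n+2) => a (n+2) * cfP a (n+1) + cfP a n

/-- `q_{n-1}` with the convention `q_{-1} = 0`. -/
def qext (a : ℕ → ℕ) : ℕ → ℕ
  | 0 => 0
  | (n+1) => cfQ a n

/-- `p_{n-1}` with the convention `p_{-1} = 1`. -/
def pext (a : ℕ → ℕ) : ℕ → ℕ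
  | 0 => 1
  | (n+1) => cfP a n

/-- `a` (with `a 1, a 2, …` relevant) is the continued fraction expansion of the
irrational `θ`: all entries are positive and the convergents tend to `θ`. -/
def IsCF (θ : ℝ) (a : ℕ → ℕ) : Prop :=
  Irrational θ ∧ (∀ n, 1 ≤ n → 1 ≤ a n) ∧
    Tendsto (fun n => (cfP a n : ℝ) / (cfQ a n : ℝ)) atTop (nhds θ)

/-- `A_α(θ) = limsup_n a_n q_{n-1}^{1-α}` (valued in `ℝ≥0∞`). -/
noncomputable def Acf (a : ℕ → ℕ) (α : ℝ) : ENNReal :=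
  Filter.limsup (fun n => (a (n+1) : ENNReal) * (cfQ a n : ENNReal) ^ (1 - α)) atTop

/-- The left shift on infinite binary sequences. -/
def shiftMap (x : ℕ → Bool) : ℕ → Bool := fun n => x (n+1)

/-- A subshift: a closed shift-invariant subset of `{0,1}^ℕ`. -/
def IsSubshift (Y : Set (ℕ → Bool)) : Prop := IsClosed Y ∧ shiftMap '' Y = Y

/-- The language of `Y`: all finite factors of elements of `Y`. -/
def Lang (Y : Set (ℕ → Bool)) : Set (List Bool) :=
  {w | ∃ x ∈ Y, ∃ k, w = (List.range w.length).map fun i => x (k + i)}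

/-- The rotation sequence of slope `θ`: `x n = ⌈θ(n+1)⌉ - ⌈θ n⌉` (as a boolean, `true` = 1). -/
noncomputable def rotWord (θ : ℝ) : ℕ → Bool :=
  fun n => if ⌈θ * ((n : ℝ)+1)⌉ - ⌈θ * (n : ℝ)⌉ = 1 then true else false

/-- The Sturmian subshift of slope `θ`: orbit closure of the rotation sequence. -/
noncomputable def sturmian (θ : ℝ) : Set (ℕ → Bool) :=
  closure {x | ∃ k, x = shiftMap^[k] (rotWord θ)}

/-- `w` is a nonempty proper prefix and suffix of `W`, both in the language of `Y`. -/
def PSPair (Y : Set (ℕ → Bool)) (w W : List Bool) : Prop :=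
  w ∈ Lang Y ∧ W ∈ Lang Y ∧ w <+: W ∧ w <:+ W ∧ W ≠ w ∧ w ≠ []

/-- `A_{α,n}`: infimum of `(|W|-|w|)/|w|^{1/α}` over admissible pairs with `|W| = n`. -/
noncomputable def repA (Y : Set (ℕ → Bool)) (α : ℝ) (n : ℕ) : ENNReal :=
  sInf {r | ∃ w W, PSPair Y w W ∧ W.length = n ∧
    r = ((W.length - w.length : ℕ) : ENNReal) / ((w.length : ENNReal) ^ (1/α))}

/-- `ℓ_α = liminf_n A_{α,n}`. -/
noncomputable def ellCf (Y : Set (ℕ → Bool)) (α : ℝ) : ENNReal :=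
  Filter.liminf (repA Y α) atTop

/-- `ℓ`: infimum of `(|W|-|w|)/|w|` over all admissible pairs; `Y` is repulsive if `ℓ > 0`. -/
noncomputable def ellRep (Y : Set (ℕ → Bool)) : ENNReal :=
  sInf {r | ∃ w W, PSPair Y w W ∧
    r = ((W.length - w.length : ℕ) : ENNReal) / (w.length : ENNReal)}

/-- The repetitive function: `repFun Y r` is the least `r'` such that every word of
length `r'` in the language contains every word of length `r` as a factor. -/
noncomputable def repFun (Y : Set (ℕ → Bool)) (r : ℕ) : ℕ :=
  sInf {r' | ∀ W ∈ Lang Y, W.length = r' → ∀ w ∈ Lang Y, w.length = r → w <:+: W}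

/-- `R_α = limsup_n R(n)/n^α`. -/
noncomputable def Ralpha (Y : Set (ℕ → Bool)) (α : ℝ) : ENNReal :=
  Filter.limsup (fun n => (repFun Y n : ENNReal) / (n : ENNReal) ^ α) atTop

/-- `Q(n)`: the supremum of powers `p` such that some word of length `n` has `W^p` in the language. -/
noncomputable def Qfun (Y : Set (ℕ → Bool)) (n : ℕ) : ENNReal :=
  sSup {x | ∃ p : ℕ, x = (p : ENNReal) ∧ ∃ W ∈ Lang Y,
    W.length = n ∧ (List.replicate p W).flatten ∈ Lang Y}

/-- `Q_α = limsup_n Q(n)/n^{α-1}`. -/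
noncomputable def Qalpha (Y : Set (ℕ → Bool)) (α : ℝ) : ENNReal :=
  Filter.limsup (fun n => Qfun Y n / (n : ENNReal) ^ (α - 1)) atTop

/-- The Jarník set `J_β^c`. -/
def Jarnik (β c : ℝ) : Set ℝ :=
  {x | x ∈ Set.Icc (0:ℝ) 1 ∧
    {pq : ℕ × ℕ | 0 < pq.2 ∧ |x - (pq.1 : ℝ)/(pq.2 : ℝ)| ≤ c * (pq.2 : ℝ) ^ (-β)}.Infinite}

/-- The exact Jarník set `Exact(β)`. -/
def ExactSet (β : ℝ) : Set ℝ :=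
  Jarnik β 1 \ ⋃ n ∈ {n : ℕ | 2 ≤ n}, Jarnik β ((n : ℝ)/((n : ℝ)+1))

/-- The substitution `τ` : `0 ↦ 0`, `1 ↦ 10`. -/
def tauW (w : List Bool) : List Bool := w.flatMap fun b => if b then [true, false] else [false]

/-- The substitution `ρ` : `0 ↦ 01`, `1 ↦ 1`. -/
def rhoW (w : List Bool) : List Bool := w.flatMap fun b => if b then [true] else [false, true]

/-- The composition `τ^{a₁} ∘ ρ^{a₂} ∘ ⋯ ∘ τ^{a_{2k-1}} ∘ ρ^{a_{2k}}`. -/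
def stageW (a : ℕ → ℕ) : ℕ → List Bool → List Bool
  | 0 => id
  | (k+1) => stageW a k ∘ tauW^[a (2*k+1)] ∘ rhoW^[a (2*k+2)]

/-- The word `R_k`. -/
def Rw (a : ℕ → ℕ) (k : ℕ) : List Bool := stageW a k [false]

/-- The word `L_k`. -/
def Lw (a : ℕ → ℕ) (k : ℕ) : List Bool := stageW a k [true]

/-- Best rational approximation of the first kind. -/
def IsBestApprox (θ : ℝ) (p q : ℕ) : Prop :=
  0 < q ∧ Nat.Coprime p q ∧
    ∀ p' q' : ℕ, 0 < q' → q' < q → |θ - (p : ℝ)/(q : ℝ)| < |θ - (p' : ℝ)/(q' : ℝ)|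

/-- The double sum `Σ_{k ≥ m} Σ_{j=1}^{a_{k+1}} (j q_k + q_{k-1})^{-t}` (valued in `ℝ≥0∞`). -/
noncomputable def dblSum (a : ℕ → ℕ) (t : ℝ) (m : ℕ) : ENNReal :=
  ∑' k : ℕ, if m ≤ k then
    ∑ j ∈ Finset.Icc 1 (a (k+1)), ((j * cfQ a k + qext a k : ℕ) : ENNReal) ^ (-t)
  else 0

/-!
Both equivalences hold because `A_α(1 - θ) = A_α(θ)`. The expansion of `1 - θ` is obtained from
that of `θ` by splitting the first entry `a₁` into `1, a₁ - 1` or, when `a₁ = 1`, by merging it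
into `a₂`; either way the convergents become `1 - pₙ/qₙ` up to an index shift, so the sequence
`(aₙ₊₁, qₙ)` is merely shifted and its limsup is unchanged. Since `IsCF` only asks the convergents
to converge, the argument rests on uniqueness of the expansion of an irrational number:
`a₁ = ⌊θ⁻¹⌋`, and the tail `a₂, a₃, …` expands `θ⁻¹ - a₁`.
-/

section Recurrences

theorem cfQ_congr {a b : ℕ → ℕ} (h : ∀ n, a (n + 1) = b (n + 1)) : ∀ n, cfQ a n = cfQ b n
  | 0 => rfl
  | 1 => h 0
  | n + 2 => by rw [cfQ, cfQ, h (n + 1), cfQ_congr h (n + 1), cfQ_congr h n]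

theorem one_le_cfQ {a : ℕ → ℕ} (ha : ∀ n, 1 ≤ n → 1 ≤ a n) : ∀ n, 1 ≤ cfQ a n
  | 0 => le_rfl
  | 1 => ha 1 le_rfl
  | n + 2 => le_add_left (one_le_cfQ ha n)

theorem cfP_le_cfQ {a : ℕ → ℕ} (ha : ∀ n, 1 ≤ n → 1 ≤ a n) : ∀ n, cfP a n ≤ cfQ a n
  | 0 => zero_le_one
  | 1 => ha 1 le_rfl
  | n + 2 => add_le_add (Nat.mul_le_mul_left _ (cfP_le_cfQ ha (n + 1))) (cfP_le_cfQ ha n)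

variable (a : ℕ → ℕ)

theorem cfP_succ_eq_cfQ_tail : ∀ n, cfP a (n + 1) = cfQ (fun k => a (k + 1)) n
  | 0 => rfl
  | 1 => by simp [cfP, cfQ]
  | n + 2 => by
    rw [cfP, cfQ, ← cfP_succ_eq_cfQ_tail (n + 1), ← cfP_succ_eq_cfQ_tail n]

theorem cfQ_succ_eq_tail :
    ∀ n, cfQ a (n + 1) = a 1 * cfQ (fun k => a (k + 1)) n + cfP (fun k => a (k + 1)) n
  | 0 => by simp [cfQ, cfP]
  | 1 => by simp only [cfQ, cfP]; ring
  | n + 2 => by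
    show a (n + 3) * cfQ a (n + 2) + cfQ a (n + 1) =
      a 1 * (a (n + 3) * _ + _) + (a (n + 3) * _ + _)
    rw [cfQ_succ_eq_tail (n + 1), cfQ_succ_eq_tail n]
    ring

end Recurrences

-- The entries of `1 - θ`: `1, a₁ - 1, a₂, …` if `a₁ ≥ 2`, and `a₂ + 1, a₃, …` if `a₁ = 1`.
def splitHead (a : ℕ → ℕ) : ℕ → ℕ
  | 0 | 1 => 1
  | 2 => a 1 - 1
  | n + 3 => a (n + 2)

def mergeHead (a : ℕ → ℕ) : ℕ → ℕ
  | 0 | 1 => a 2 + 1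
  | n + 2 => a (n + 3)

section HeadTransforms

variable {a : ℕ → ℕ}

theorem cfQ_splitHead (h : 1 ≤ a 1) : ∀ n, cfQ (splitHead a) (n + 2) = cfQ a (n + 1)
  | 0 => by simp [cfQ, splitHead]; omega
  | 1 => by
    show a 2 * cfQ (splitHead a) 2 + 1 = a 2 * cfQ a 1 + 1
    rw [cfQ_splitHead h 0]
  | n + 2 => by
    show a (n + 3) * cfQ (splitHead a) (n + 3) + cfQ (splitHead a) (n + 2) =
      a (n + 3) * cfQ a (n + 2) + cfQ a (n + 1)
    rw [cfQ_splitHead h (n + 1), cfQ_splitHead h n]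

theorem cfP_splitHead_add (h : 1 ≤ a 1) :
    ∀ n, cfP (splitHead a) (n + 1) + cfP a n = cfQ a n
  | 0 => rfl
  | 1 => by simp [cfP, cfQ, splitHead]; omega
  | n + 2 => by
    show a (n + 2) * cfP (splitHead a) (n + 2) + cfP (splitHead a) (n + 1) +
      (a (n + 2) * cfP a (n + 1) + cfP a n) = a (n + 2) * cfQ a (n + 1) + cfQ a n
    rw [← cfP_splitHead_add h (n + 1), ← cfP_splitHead_add h n]
    ring

theorem cfQ_mergeHead (h : a 1 = 1) : ∀ n, cfQ (mergeHead a) n = cfQ a (n + 1)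
  | 0 => h.symm
  | 1 => by simp [cfQ, mergeHead, h]
  | n + 2 => by
    show a (n + 3) * cfQ (mergeHead a) (n + 1) + cfQ (mergeHead a) n =
      a (n + 3) * cfQ a (n + 2) + cfQ a (n + 1)
    rw [cfQ_mergeHead h (n + 1), cfQ_mergeHead h n]

theorem cfP_mergeHead_add (h : a 1 = 1) :
    ∀ n, cfP (mergeHead a) n + cfP a (n + 1) = cfQ a (n + 1)
  | 0 => h.symm
  | 1 => by simp [cfP, cfQ, h]; ring
  | n + 2 => by
    show a (n + 3) * cfP (mergeHead a) (n + 1) + cfP (mergeHead a) n +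
      (a (n + 3) * cfP a (n + 2) + cfP a (n + 1)) = a (n + 3) * cfQ a (n + 2) + cfQ a (n + 1)
    rw [← cfP_mergeHead_add h (n + 1), ← cfP_mergeHead_add h n]
    ring

end HeadTransforms

namespace IsCF

variable {θ : ℝ} {a b : ℕ → ℕ}

theorem cfQ_pos (h : IsCF θ a) (n : ℕ) : (0 : ℝ) < cfQ a n := by
  exact_mod_cast one_le_cfQ h.2.1 n

theorem mem_Icc (h : IsCF θ a) : θ ∈ Set.Icc (0 : ℝ) 1 := by
  refine isClosed_Icc.mem_of_tendsto h.2.2 (Eventually.of_forall fun n => ?_)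
  have hpq : (cfP a n : ℝ) ≤ cfQ a n := by exact_mod_cast cfP_le_cfQ h.2.1 n
  exact ⟨by positivity, div_le_one_of_le₀ hpq (h.cfQ_pos n).le⟩

theorem tail (h : IsCF θ a) : IsCF (θ⁻¹ - a 1) (fun n => a (n + 1)) := by
  refine ⟨h.1.inv.sub_natCast _, fun n hn => h.2.1 (n + 1) (by omega), ?_⟩
  have hconv : Tendsto (fun n => ((cfP a (n + 1) : ℝ) / cfQ a (n + 1))⁻¹ - a 1) atTop
      (𝓝 (θ⁻¹ - a 1)) :=
    (((tendsto_add_atTop_iff_nat 1).2 h.2.2).inv₀ h.1.ne_zero).sub_const _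
  refine hconv.congr fun n => ?_
  have hq : (0 : ℝ) < cfQ (fun k => a (k + 1)) n := by
    exact_mod_cast one_le_cfQ (fun k hk => h.2.1 (k + 1) (by omega)) n
  rw [cfP_succ_eq_cfQ_tail, cfQ_succ_eq_tail, inv_div]
  push_cast
  field_simp
  ring

theorem entry_one_eq_floor (h : IsCF θ a) : a 1 = ⌊θ⁻¹⌋₊ := by
  obtain ⟨hirr, -, -⟩ := h.tail
  obtain ⟨h0, h1⟩ := h.tail.mem_Icc
  have h1' : θ⁻¹ - a 1 < 1 := h1.lt_of_ne hirr.ne_one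
  exact ((Nat.floor_eq_iff (inv_nonneg.2 h.mem_Icc.1)).2 ⟨by linarith, by linarith⟩).symm

theorem entry_succ_eq (ha : IsCF θ a) (hb : IsCF θ b) (n : ℕ) : a (n + 1) = b (n + 1) := by
  induction n generalizing θ a b with
  | zero => rw [ha.entry_one_eq_floor, hb.entry_one_eq_floor]
  | succ n ih =>
    have hb' := hb.tail
    rw [hb.entry_one_eq_floor, ← ha.entry_one_eq_floor] at hb'
    exact ih ha.tail hb'

theorem one_sub_of_shift (ha : IsCF θ a) (hb : ∀ n, 1 ≤ n → 1 ≤ b n) (k : ℕ)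
    (hQ : ∀ n, cfQ b (n + k) = cfQ a (n + 1))
    (hP : ∀ n, cfP b (n + k) + cfP a (n + 1) = cfQ a (n + 1)) : IsCF (1 - θ) b := by
  refine ⟨by simpa using ha.1.natCast_sub 1, hb, ?_⟩
  rw [← tendsto_add_atTop_iff_nat k]
  have hconv : Tendsto (fun n => 1 - (cfP a (n + 1) : ℝ) / cfQ a (n + 1)) atTop (𝓝 (1 - θ)) :=
    tendsto_const_nhds.sub ((tendsto_add_atTop_iff_nat 1).2 ha.2.2)
  refine hconv.congr fun n => ?_
  have hq := ha.cfQ_pos (n + 1)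
  have hp : (cfP b (n + k) : ℝ) = cfQ a (n + 1) - cfP a (n + 1) := by
    rw [← hP n]
    push_cast
    ring
  rw [hp, hQ n]
  field_simp

theorem one_sub_splitHead (ha : IsCF θ a) (h : 2 ≤ a 1) : IsCF (1 - θ) (splitHead a) := by
  have h1 : 1 ≤ a 1 := by omega
  refine ha.one_sub_of_shift (fun n hn => ?_) 2 (cfQ_splitHead h1)
    fun n => cfP_splitHead_add h1 (n + 1)
  match n, hn with
  | 1, _ => exact le_rfl
  | 2, _ => show 1 ≤ a 1 - 1; omega
  | n + 3, _ => exact ha.2.1 (n + 2) (by omega)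

theorem one_sub_mergeHead (ha : IsCF θ a) (h : a 1 = 1) : IsCF (1 - θ) (mergeHead a) := by
  refine ha.one_sub_of_shift (fun n hn => ?_) 0 (cfQ_mergeHead h) (cfP_mergeHead_add h)
  match n, hn with
  | 1, _ => exact Nat.le_add_left 1 _
  | n + 2, _ => exact ha.2.1 (n + 3) (by omega)

end IsCF

theorem Acf_eq_of_shift {a b : ℕ → ℕ} {j k : ℕ} (hentry : ∀ n, b (n + k + 1) = a (n + j + 1))
    (hQ : ∀ n, cfQ b (n + k) = cfQ a (n + j)) (α : ℝ) : Acf b α = Acf a α := by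
  set f := fun n => (a (n + 1) : ENNReal) * (cfQ a n : ENNReal) ^ (1 - α)
  set g := fun n => (b (n + 1) : ENNReal) * (cfQ b n : ENNReal) ^ (1 - α)
  calc limsup g atTop = limsup (fun n => g (n + k)) atTop := (limsup_nat_add g k).symm
    _ = limsup (fun n => f (n + j)) atTop := by simp only [g, f, hentry, hQ]
    _ = limsup f atTop := limsup_nat_add f j

theorem Acf_one_sub {θ : ℝ} {a b : ℕ → ℕ} (ha : IsCF θ a) (hb : IsCF (1 - θ) b) (α : ℝ) :
    Acf b α = Acf a α := by
  rcases (ha.2.1 1 le_rfl).eq_or_lt with h1 | h2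
  · have hmerge := hb.entry_succ_eq (ha.one_sub_mergeHead h1.symm)
    refine Acf_eq_of_shift (j := 2) (k := 1) (fun n => hmerge (n + 1)) (fun n => ?_) α
    rw [cfQ_congr hmerge, cfQ_mergeHead h1.symm]
  · have hsplit := hb.entry_succ_eq (ha.one_sub_splitHead h2)
    refine Acf_eq_of_shift (j := 1) (k := 2) (fun n => hsplit (n + 2)) (fun n => ?_) α
    rw [cfQ_congr hsplit, cfQ_splitHead h2.le]

theorem stmt1_general (θ : ℝ) (a b : ℕ → ℕ) (α : ℝ)
    (hcf : IsCF θ a) (hcf' : IsCF (1 - θ) b) :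
    (Acf a α < ⊤ ↔ Acf b α < ⊤) ∧ (0 < Acf a α ↔ 0 < Acf b α) := by
  rw [Acf_one_sub hcf hcf' α]
  exact ⟨Iff.rfl, Iff.rfl⟩

/-- `A_α(θ) < ∞ ↔ A_α(1-θ) < ∞` and `A_α(θ) > 0 ↔ A_α(1-θ) > 0`. -/
theorem stmt1 (θ : ℝ) (a b : ℕ → ℕ) (α : ℝ) (hα : 1 ≤ α)
    (hcf : IsCF θ a) (hcf' : IsCF (1 - θ) b) :
    (Acf a α < ⊤ ↔ Acf b α < ⊤) ∧ (0 < Acf a α ↔ 0 < Acf b α) :=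
  stmt1_general θ a b α hcf hcf'

end CFPaper
end

section
/- Let τ and ρ be the monoid homomorphisms on {0,1}* determined by τ(0) = (0), τ(1) = (1,0), ρ(0) = (0,1), ρ(1) = (1). For irrational θ = [0; a₁+1, a₂, ...] ∈ [0,1/2], define R₀ = (0), L₀ = (1), and for k ≥ 1, R_k = τ^{a₁} ρ^{a₂} ⋯ τ^{a_{2k-1}} ρ^{a_{2k}}(0) and L_k = τ^{a₁} ρ^{a₂} ⋯ τ^{a_{2k-1}} ρ^{a_{2k}}(1). Then for all k ≥ 1: |R_k| = q_{2k}, |L_k| = q_{2k-1}, R_k = R_{k-1} (L_k)^{a_{2k}}, and L_k = L_{k-1} (R_{k-1})^{a_{2k-1}}, where qₙ are the continued fraction denominators of θ. -/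
/-!
`τ`, `ρ` and hence every stage `τ^{a₁} ρ^{a₂} ⋯ τ^{a_{2k-1}} ρ^{a_{2k}}` are morphisms of the
free monoid. Since `ρ` fixes `1` and `ρᵐ(0) = 0 1ᵐ`, while `τ` fixes `0` and `τᵐ(1) = 1 0ᵐ`,
applying the stage `k` morphism to `τ^{a_{2k+1}}(1) = 1 0^{a_{2k+1}}` and to
`τ^{a_{2k+1}} ρ^{a_{2k+2}}(0) = 0 (τ^{a_{2k+1}}(1))^{a_{2k+2}}` gives the two recursions, and
taking lengths turns them into the recursion of the denominators `qₙ`.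
-/

open Filter Topology MeasureTheory

namespace CFPaper

section Words

variable {α : Type*}

theorem length_flatten_replicate (p : ℕ) (w : List α) :
    (List.replicate p w).flatten.length = p * w.length := by
  simp only [List.length_flatten, List.map_replicate, List.sum_replicate, smul_eq_mul]

def IsAppendHom (f : List α → List α) : Prop :=
  ∀ u v, f (u ++ v) = f u ++ f v

namespace IsAppendHom

variable {f g : List α → List α}

theorem comp (hf : IsAppendHom f) (hg : IsAppendHom g) : IsAppendHom (f ∘ g) := by
  intro u v
  rw [Function.comp_apply, Function.comp_apply, Function.comp_apply, hg, hf]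

theorem iterate (hf : IsAppendHom f) (m : ℕ) : IsAppendHom f^[m] := by
  induction m with
  | zero => intro u v; rfl
  | succ m ih => simpa only [Function.iterate_succ] using ih.comp hf

theorem map_nil (hf : IsAppendHom f) : f [] = [] := by
  have h := congrArg List.length (hf [] [])
  simp only [List.append_nil, List.length_append] at h
  exact List.eq_nil_of_length_eq_zero (by omega)

theorem map_flatten_replicate (hf : IsAppendHom f) (p : ℕ) (w : List α) :
    f (List.replicate p w).flatten = (List.replicate p (f w)).flatten := by
  induction p with
  | zero => exact hf.map_nil
  | succ p ih => simp only [List.replicate_succ, List.flatten_cons, hf _ _, ih]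

theorem iterate_singleton (hf : IsAppendHom f) {x : α} {w : List α}
    (hx : f [x] = [x] ++ w) (hw : f w = w) (m : ℕ) :
    f^[m] [x] = [x] ++ (List.replicate m w).flatten := by
  induction m with
  | zero => rfl
  | succ m ih =>
    rw [Function.iterate_succ_apply', ih, hf, hx, hf.map_flatten_replicate, hw,
      List.replicate_succ, List.flatten_cons, List.append_assoc]

end IsAppendHom

end Words

theorem isAppendHom_tauW : IsAppendHom tauW := fun _ _ => by
  unfold tauW; exact List.flatMap_append

theorem isAppendHom_rhoW : IsAppendHom rhoW := fun _ _ => by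
  unfold rhoW; exact List.flatMap_append

theorem isAppendHom_stageW (a : ℕ → ℕ) (k : ℕ) : IsAppendHom (stageW a k) := by
  induction k with
  | zero => intro u v; rfl
  | succ k ih => exact ih.comp ((isAppendHom_tauW.iterate _).comp (isAppendHom_rhoW.iterate _))

theorem tauW_iterate_false (m : ℕ) : tauW^[m] [false] = [false] :=
  Function.iterate_fixed rfl m

theorem rhoW_iterate_true (m : ℕ) : rhoW^[m] [true] = [true] :=
  Function.iterate_fixed rfl m

theorem tauW_iterate_true (m : ℕ) :
    tauW^[m] [true] = [true] ++ (List.replicate m [false]).flatten :=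
  isAppendHom_tauW.iterate_singleton rfl rfl m

theorem rhoW_iterate_false (m : ℕ) :
    rhoW^[m] [false] = [false] ++ (List.replicate m [true]).flatten :=
  isAppendHom_rhoW.iterate_singleton rfl rfl m

theorem Lw_succ_eq_stageW (a : ℕ → ℕ) (k : ℕ) :
    Lw a (k + 1) = stageW a k (tauW^[a (2 * k + 1)] [true]) := by
  simp only [Lw, stageW, Function.comp_apply, rhoW_iterate_true]

theorem Lw_succ (a : ℕ → ℕ) (k : ℕ) :
    Lw a (k + 1) = Lw a k ++ (List.replicate (a (2 * k + 1)) (Rw a k)).flatten := by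
  rw [Lw_succ_eq_stageW, tauW_iterate_true, isAppendHom_stageW,
    (isAppendHom_stageW a k).map_flatten_replicate, Lw, Rw]

theorem Rw_succ (a : ℕ → ℕ) (k : ℕ) :
    Rw a (k + 1) = Rw a k ++ (List.replicate (a (2 * k + 2)) (Lw a (k + 1))).flatten := by
  have hτ := isAppendHom_tauW.iterate (a (2 * k + 1))
  have hstage := isAppendHom_stageW a k
  rw [Rw, stageW, Function.comp_apply, Function.comp_apply, rhoW_iterate_false, hτ,
    hτ.map_flatten_replicate, tauW_iterate_false, hstage, hstage.map_flatten_replicate,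
    Lw_succ_eq_stageW, Rw]

theorem length_Rw_Lw (a : ℕ → ℕ) (k : ℕ) :
    (Rw a k).length = cfQ (fun n => if n = 1 then a 1 + 1 else a n) (2 * k) ∧
      (Lw a (k + 1)).length = cfQ (fun n => if n = 1 then a 1 + 1 else a n) (2 * k + 1) := by
  induction k with
  | zero =>
    simp only [Lw_succ, List.length_append, length_flatten_replicate]
    simp [Rw, Lw, stageW, cfQ, add_comm]
  | succ k ih =>
    obtain ⟨hR, hL⟩ := ih
    have hR' : (Rw a (k + 1)).length =
        cfQ (fun n => if n = 1 then a 1 + 1 else a n) (2 * (k + 1)) := by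
      rw [Rw_succ, List.length_append, length_flatten_replicate, hR, hL,
        show 2 * (k + 1) = 2 * k + 2 by ring, cfQ, if_neg (by omega)]
      ring
    refine ⟨hR', ?_⟩
    rw [Lw_succ, List.length_append, length_flatten_replicate, hL, hR',
      show 2 * (k + 1) + 1 = (2 * k + 1) + 2 by ring, cfQ, if_neg (by omega),
      show 2 * k + 1 + 1 = 2 * (k + 1) by ring]
    ring

theorem stmt4_general (a : ℕ → ℕ) :
    ∀ k, 1 ≤ k →
      (Rw a k).length = cfQ (fun n => if n = 1 then a 1 + 1 else a n) (2*k) ∧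
      (Lw a k).length = cfQ (fun n => if n = 1 then a 1 + 1 else a n) (2*k - 1) ∧
      Rw a k = Rw a (k-1) ++ (List.replicate (a (2*k)) (Lw a k)).flatten ∧
      Lw a k = Lw a (k-1) ++ (List.replicate (a (2*k-1)) (Rw a (k-1))).flatten := by
  rintro (_ | j) hj
  · omega
  obtain ⟨hR, -⟩ := length_Rw_Lw a (j + 1)
  obtain ⟨-, hL⟩ := length_Rw_Lw a j
  rw [Nat.add_sub_cancel, show 2 * (j + 1) - 1 = 2 * j + 1 by omega]
  exact ⟨hR, hL, Rw_succ a j, Lw_succ a j⟩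

/-- for θ = [0; a₁+1, a₂, …] ∈ [0,1/2] irrational and all k ≥ 1:
`|R_k| = q_{2k}`, `|L_k| = q_{2k-1}`, `R_k = R_{k-1} (L_k)^{a_{2k}}` and
`L_k = L_{k-1} (R_{k-1})^{a_{2k-1}}`. -/
theorem stmt4 (θ : ℝ) (a : ℕ → ℕ) (ha : ∀ n, 1 ≤ n → 1 ≤ a n)
    (hθ : θ ∈ Set.Icc (0:ℝ) (1/2))
    (hcf : IsCF θ (fun n => if n = 1 then a 1 + 1 else a n)) :
    ∀ k, 1 ≤ k →
      (Rw a k).length = cfQ (fun n => if n = 1 then a 1 + 1 else a n) (2*k) ∧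
      (Lw a k).length = cfQ (fun n => if n = 1 then a 1 + 1 else a n) (2*k - 1) ∧
      Rw a k = Rw a (k-1) ++ (List.replicate (a (2*k)) (Lw a k)).flatten ∧
      Lw a k = Lw a (k-1) ++ (List.replicate (a (2*k-1)) (Rw a (k-1))).flatten :=
  stmt4_general a

end CFPaper
end

section
/- A Sturmian subshift X of slope θ is 1-repulsive if and only if it is repulsive. -/
open Filter Topology MeasureTheory

namespace CFPaper

/-!
For every subshift `ℓ ≤ A_{1,n}` for all `n`, hence `ℓ ≤ ℓ₁`. Conversely an admissible pair
`(w, W)` has ratio `(|W| - |w|)/|w| ≥ 1/|W|`, so pairs of ratio below `ε` are long and `ℓ = 0`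
forces `ℓ₁ = 0`. The only Sturmian input is `ℓ₁ < ∞`: if `p` is a best approximation denominator
of `θ`, i.e. `‖pθ‖ ≤ ‖mθ‖` for `1 ≤ m ≤ p`, then adding `pθ - round(pθ)` does not move `mθ` past
an integer, so `⌈(m+p)θ⌉ = ⌈mθ⌉ + round(pθ)` and the rotation word is `p`-periodic on `[1, p)`.
Its factor of length `2p - 1` starting at `1` then has a border of length `p - 1`, which gives
`A_{1,2p-1} ≤ 2` for infinitely many `p`.
-/

section Window

variable {α : Type*}

def window (x : ℕ → α) (s n : ℕ) : List α := (List.range n).map fun i => x (s + i)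

@[simp]
lemma length_window (x : ℕ → α) (s n : ℕ) : (window x s n).length = n := by
  simp [window]

lemma window_add (x : ℕ → α) (s m n : ℕ) :
    window x s (m + n) = window x s m ++ window x (s + m) n := by
  simp [window, List.range_add, add_assoc]

lemma window_isPrefix_window_add (x : ℕ → α) (s m n : ℕ) : window x s m <+: window x s (m + n) := by
  rw [window_add]
  exact List.prefix_append _ _

lemma window_isSuffix_of_periodic {x : ℕ → α} {s n p : ℕ}
    (hper : ∀ i < n, x (s + p + i) = x (s + i)) : window x s n <:+ window x s (p + n) := by
  have hshift : window x (s + p) n = window x s n :=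
    List.map_congr_left fun i hi => hper i (List.mem_range.1 hi)
  rw [window_add, hshift]
  exact List.suffix_append _ _

end Window

section Repulsive

variable {Y : Set (ℕ → Bool)}

lemma window_mem_lang {x : ℕ → Bool} (hx : x ∈ Y) (s n : ℕ) : window x s n ∈ Lang Y :=
  ⟨x, hx, s, by simp [window]⟩

lemma psPair_window_of_periodic {x : ℕ → Bool} (hx : x ∈ Y) {s n p : ℕ} (hn : n ≠ 0) (hp : p ≠ 0)
    (hper : ∀ i < n, x (s + p + i) = x (s + i)) : PSPair Y (window x s n) (window x s (p + n)) := by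
  refine ⟨window_mem_lang hx s n, window_mem_lang hx s (p + n), ?_,
    window_isSuffix_of_periodic hper, fun h => hp ?_, fun h => hn ?_⟩
  · rw [add_comm]
    exact window_isPrefix_window_add x s n p
  · simpa using congrArg List.length h
  · simpa using congrArg List.length h

lemma PSPair.length_lt {w W : List Bool} (h : PSPair Y w W) : w.length < W.length :=
  h.2.2.1.length_le.lt_of_ne fun hlen => h.2.2.2.2.1 (h.2.2.1.eq_of_length hlen).symm

lemma PSPair.inv_length_le {w W : List Bool} (h : PSPair Y w W) :
    (W.length : ENNReal)⁻¹ ≤ ((W.length - w.length : ℕ) : ENNReal) / w.length := by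
  have hlt := h.length_lt
  rw [← one_div]
  exact ENNReal.div_le_div (by exact_mod_cast (by omega : 1 ≤ W.length - w.length))
    (by exact_mod_cast hlt.le)

lemma repA_one_le {w W : List Bool} (h : PSPair Y w W) :
    repA Y 1 W.length ≤ ((W.length - w.length : ℕ) : ENNReal) / w.length :=
  sInf_le ⟨w, W, h, rfl, by simp⟩

lemma ellRep_le {w W : List Bool} (h : PSPair Y w W) :
    ellRep Y ≤ ((W.length - w.length : ℕ) : ENNReal) / w.length :=
  sInf_le ⟨w, W, h, rfl⟩

lemma ellRep_le_repA_one (n : ℕ) : ellRep Y ≤ repA Y 1 n :=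
  le_sInf <| by
    rintro _ ⟨w, W, h, -, rfl⟩
    simpa using ellRep_le h

lemma ellRep_le_ellCf_one : ellRep Y ≤ ellCf Y 1 :=
  le_liminf_of_le (by isBoundedDefault) (Eventually.of_forall ellRep_le_repA_one)

lemma ellCf_one_eq_zero_of_ellRep_eq_zero (h : ellRep Y = 0) : ellCf Y 1 = 0 := by
  refine le_antisymm (le_of_forall_gt_imp_ge_of_dense fun ε hε => ?_) bot_le
  refine liminf_le_of_frequently_le (frequently_atTop.2 fun N => ?_)
  have hsmall : ellRep Y < min ε (N : ENNReal)⁻¹ := h ▸ lt_min hε (by simp)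
  obtain ⟨_, ⟨w, W, hw, rfl⟩, hlt⟩ := sInf_lt_iff.1 hsmall
  refine ⟨W.length, ?_, (repA_one_le hw).trans (hlt.le.trans (min_le_left _ _))⟩
  have hinv := hw.inv_length_le.trans_lt (hlt.trans_le (min_le_right _ _))
  exact_mod_cast (ENNReal.inv_lt_inv.1 hinv).le

end Repulsive

lemma Int.ceil_add_eq_of_abs_le_abs_sub_round {K : Type*} [Field K] [LinearOrder K]
    [IsStrictOrderedRing K] [FloorRing K] {y δ : K} (hδ : |δ| ≤ |y - round y|)
    (hyδ : ∀ z : ℤ, y + δ ≠ z) : ⌈y + δ⌉ = ⌈y⌉ := by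
  have hc := abs_le.1 (hδ.trans (round_le y ⌈y⌉))
  have hf := abs_le.1 (hδ.trans (round_le y ⌊y⌋))
  rw [abs_of_nonpos (sub_nonpos.2 (Int.le_ceil y))] at hc
  rw [abs_of_nonneg (sub_nonneg.2 (Int.floor_le y))] at hf
  have hceil : (⌈y⌉ : K) ≤ ⌊y⌋ + 1 := by exact_mod_cast Int.ceil_le_floor_add_one y
  rw [Int.ceil_eq_iff]
  refine ⟨lt_of_le_of_ne (by linarith) fun h => hyδ (⌈y⌉ - 1) (by push_cast; linarith), by linarith⟩

section Sturmian

variable {θ : ℝ}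

def IsBestApproxDenom (θ : ℝ) (p : ℕ) : Prop :=
  ∀ m : ℕ, 1 ≤ m → m ≤ p → |θ * p - round (θ * p)| ≤ |θ * m - round (θ * m)|

lemma exists_isBestApproxDenom_gt (hθ : Irrational θ) (T : ℕ) :
    ∃ p, T < p ∧ IsBestApproxDenom θ p := by
  set g : ℕ → ℝ := fun m => |θ * m - round (θ * m)|
  have hne : (Finset.Icc 1 (T + 1)).Nonempty := ⟨1, by simp⟩
  set c := (Finset.Icc 1 (T + 1)).inf' hne g
  have hc : 0 < c := (Finset.lt_inf'_iff hne).2 fun m hm =>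
    abs_pos.2 (sub_ne_zero.2 ((hθ.mul_natCast (by simp at hm; omega)).ne_int _))
  have hex : ∃ d, 1 ≤ d ∧ g d < c := by
    obtain ⟨n, hn⟩ := exists_nat_one_div_lt hc
    obtain ⟨d, hd, -, hdc⟩ := Real.exists_nat_abs_mul_sub_round_le θ n.succ_pos
    refine ⟨d, hd, lt_of_le_of_lt ?_ hn⟩
    calc g d = |d * θ - round (d * θ)| := by simp only [g, mul_comm]
      _ ≤ 1 / ((n + 1 : ℕ) + 1) := hdc
      _ ≤ 1 / (n + 1) := by gcongr; linarith
  -- The least such `d` beats every `m < d` as well as every `m ≤ T + 1`.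
  classical
  obtain ⟨hp1, hpc⟩ := Nat.find_spec hex
  refine ⟨Nat.find hex, ?_, fun m hm hmp => ?_⟩
  · by_contra! hle
    exact (Finset.inf'_le g (Finset.mem_Icc.2 ⟨hp1, by omega⟩)).not_gt hpc
  · rcases hmp.lt_or_eq with hlt | rfl
    · have hcm : ¬(1 ≤ m ∧ g m < c) := Nat.find_min hex hlt
      exact hpc.le.trans (not_lt.1 fun h => hcm ⟨hm, h⟩)
    · exact le_rfl

lemma ceil_mul_add_of_isBestApproxDenom (hθ : Irrational θ) {p m : ℕ} (hp : IsBestApproxDenom θ p)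
    (hm : 1 ≤ m) (hmp : m ≤ p) : ⌈θ * ((m + p : ℕ) : ℝ)⌉ = ⌈θ * m⌉ + round (θ * p) := by
  have hsplit : θ * ((m + p : ℕ) : ℝ) = θ * m + (θ * p - round (θ * p)) + round (θ * p) := by
    push_cast; ring
  rw [hsplit, Int.ceil_add_intCast, Int.ceil_add_eq_of_abs_le_abs_sub_round (hp m hm hmp)]
  intro z hz
  exact (hθ.mul_natCast (m := m + p) (by omega)).ne_int (z + round (θ * p)) (by push_cast; linarith)

lemma rotWord_add_of_isBestApproxDenom (hθ : Irrational θ) {p j : ℕ} (hp : IsBestApproxDenom θ p)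
    (hj : 1 ≤ j) (hjp : j < p) : rotWord θ (j + p) = rotWord θ j := by
  have h₀ := ceil_mul_add_of_isBestApproxDenom hθ hp hj hjp.le
  have h₁ := ceil_mul_add_of_isBestApproxDenom hθ hp (m := j + 1) (by omega) hjp
  have e₀ : θ * (((j + p : ℕ) : ℝ) + 1) = θ * ((j + 1 + p : ℕ) : ℝ) := by push_cast; ring
  have e₁ : θ * ((j : ℝ) + 1) = θ * ((j + 1 : ℕ) : ℝ) := by push_cast; ring
  simp only [rotWord, e₀, e₁, h₀, h₁, add_sub_add_right_eq_sub]

lemma rotWord_mem_sturmian (θ : ℝ) : rotWord θ ∈ sturmian θ :=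
  subset_closure ⟨0, rfl⟩

lemma repA_sturmian_le_two (hθ : Irrational θ) {p : ℕ} (hp : IsBestApproxDenom θ p) (hp2 : 2 ≤ p) :
    repA (sturmian θ) 1 (p + (p - 1)) ≤ 2 := by
  have hpair := psPair_window_of_periodic (rotWord_mem_sturmian θ) (s := 1) (n := p - 1) (p := p)
    (by omega) (by omega) fun i hi => by
      rw [add_right_comm]
      exact rotWord_add_of_isBestApproxDenom hθ hp (by omega) (by omega)
  calc repA (sturmian θ) 1 (p + (p - 1))
        ≤ ((p + (p - 1) - (p - 1) : ℕ) : ENNReal) / (p - 1 : ℕ) := by simpa using repA_one_le hpair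
    _ ≤ 2 := by
        rw [Nat.add_sub_cancel]
        refine ENNReal.div_le_of_le_mul ?_
        exact_mod_cast (by omega : p ≤ 2 * (p - 1))

lemma frequently_repA_sturmian_le_two (hθ : Irrational θ) :
    ∃ᶠ n in atTop, repA (sturmian θ) 1 n ≤ 2 :=
  frequently_atTop.2 fun N => by
    obtain ⟨p, hNp, hp⟩ := exists_isBestApproxDenom_gt hθ (N + 1)
    exact ⟨p + (p - 1), by omega, repA_sturmian_le_two hθ hp (by omega)⟩

end Sturmian

theorem stmt5_general (θ : ℝ) (hθ : Irrational θ) :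
    (0 < ellCf (sturmian θ) 1 ∧ ellCf (sturmian θ) 1 < ⊤) ↔ 0 < ellRep (sturmian θ) := by
  refine ⟨fun h => pos_iff_ne_zero.2 fun h0 => h.1.ne' (ellCf_one_eq_zero_of_ellRep_eq_zero h0),
    fun h => ⟨h.trans_le ellRep_le_ellCf_one, ?_⟩⟩
  exact (liminf_le_of_frequently_le (frequently_repA_sturmian_le_two hθ)).trans_lt (by norm_num)

/-- a Sturmian subshift is 1-repulsive iff it is repulsive. -/
theorem stmt5 (θ : ℝ) (hθ : Irrational θ) (hθ' : θ ∈ Set.Icc (0:ℝ) 1) :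
    (0 < ellCf (sturmian θ) 1 ∧ ellCf (sturmian θ) 1 < ⊤) ↔ 0 < ellRep (sturmian θ) :=
  stmt5_general θ hθ

end CFPaper
end

section
/- For α > 1, the set of irrational θ ∈ [0,1] with limsup_{n→∞} aₙ qₙ₋₁^{1-α} > 0 is contained in the countable union over m ∈ ℕ of the Jarník sets J_{α+1}^{m} = { x ∈ [0,1] : |x − p/q| ≤ m q^{-(α+1)} for infinitely many p, q ∈ ℕ }. Consequently, dim_H(Θ̲_α) ≤ 2/(α+1). -/
open Filter Topology MeasureTheory

namespace CFPaper

/-!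
If `a_{n+1} q_n^{1-α} > 1/m` for infinitely many `n`, then
`|θ - p_n/q_n| ≤ 2 / (q_n q_{n+1}) ≤ 2 / (a_{n+1} q_n²) ≤ 2m q_n^{-(α+1)}` for those `n`,
so `θ ∈ J_{α+1}^{2m}`.

For the dimension bound (the easy half of Jarník's theorem), `J_β^c` is covered, for every `Q`,
by the balls of radius `c q^{-β}` around the fractions `p/q` with `q ≥ Q` and `p ≤ (⌈c⌉ + 1) q`.
There are `O(q)` of them for each `q`, so their `s`-dimensional cost is bounded by the tail
`∑_{q ≥ Q} q^{1-βs}` of a series that converges once `s > 2/β`.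
-/

open scoped ENNReal

section Convergents

variable {a : ℕ → ℕ}

lemma cfQ_pos (ha : ∀ n, 1 ≤ n → 1 ≤ a n) : ∀ n, 0 < cfQ a n
  | 0 => Nat.one_pos
  | 1 => ha 1 le_rfl
  | n + 2 => by have := cfQ_pos ha n; simp only [cfQ]; positivity

lemma mul_cfQ_le_cfQ_succ (n : ℕ) : a (n + 1) * cfQ a n ≤ cfQ a (n + 1) := by
  cases n with
  | zero => simp [cfQ]
  | succ n => exact Nat.le_add_right _ _

lemma cfQ_le_cfQ_succ (ha : ∀ n, 1 ≤ n → 1 ≤ a n) (n : ℕ) : cfQ a n ≤ cfQ a (n + 1) :=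
  (Nat.le_mul_of_pos_left _ (ha (n + 1) n.succ_pos)).trans (mul_cfQ_le_cfQ_succ n)

lemma cfQ_succ_lt (ha : ∀ n, 1 ≤ n → 1 ≤ a n) (n : ℕ) : cfQ a (n + 1) < cfQ a (n + 2) := by
  have h₁ := cfQ_pos ha n
  have h₂ := Nat.le_mul_of_pos_left (cfQ a (n + 1)) (ha (n + 2) (by omega))
  show cfQ a (n + 1) < a (n + 2) * cfQ a (n + 1) + cfQ a n
  omega

lemma two_mul_cfQ_le (ha : ∀ n, 1 ≤ n → 1 ≤ a n) (n : ℕ) : 2 * cfQ a n ≤ cfQ a (n + 2) := by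
  have h₁ := cfQ_le_cfQ_succ ha n
  have h₂ := Nat.le_mul_of_pos_left (cfQ a (n + 1)) (ha (n + 2) (by omega))
  show 2 * cfQ a n ≤ a (n + 2) * cfQ a (n + 1) + cfQ a n
  omega

lemma tendsto_cfQ_atTop (ha : ∀ n, 1 ≤ n → 1 ≤ a n) : Tendsto (cfQ a) atTop atTop :=
  (tendsto_add_atTop_iff_nat 1).mp (strictMono_nat_of_lt_succ (cfQ_succ_lt ha)).tendsto_atTop

lemma two_pow_mul_cfQ_mul_cfQ_succ_le (ha : ∀ n, 1 ≤ n → 1 ≤ a n) (n j : ℕ) :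
    2 ^ j * (cfQ a n * cfQ a (n + 1)) ≤ cfQ a (n + j) * cfQ a (n + j + 1) := by
  induction j with
  | zero => simp
  | succ j ih =>
    calc 2 ^ (j + 1) * (cfQ a n * cfQ a (n + 1))
        ≤ 2 * cfQ a (n + j) * cfQ a (n + j + 1) := by rw [pow_succ]; nlinarith
      _ ≤ cfQ a (n + j + 2) * cfQ a (n + j + 1) :=
        Nat.mul_le_mul_right _ (two_mul_cfQ_le ha (n + j))
      _ = cfQ a (n + (j + 1)) * cfQ a (n + (j + 1) + 1) := by rw [mul_comm]; rfl

lemma cfP_mul_cfQ_sub_cfP_mul_cfQ (n : ℕ) :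
    (cfP a (n + 1) * cfQ a n - cfP a n * cfQ a (n + 1) : ℤ) = (-1) ^ n := by
  induction n with
  | zero => simp [cfP, cfQ]
  | succ n ih =>
    simp only [cfP, cfQ, Nat.cast_add, Nat.cast_mul] at ih ⊢
    rw [pow_succ, ← ih]
    ring

lemma abs_cfP_div_cfQ_succ_sub (ha : ∀ n, 1 ≤ n → 1 ≤ a n) (n : ℕ) :
    |(cfP a (n + 1) : ℝ) / cfQ a (n + 1) - cfP a n / cfQ a n|
      = 1 / (cfQ a n * cfQ a (n + 1)) := by
  have hq : (0 : ℝ) < cfQ a n := by exact_mod_cast cfQ_pos ha n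
  have hq' : (0 : ℝ) < cfQ a (n + 1) := by exact_mod_cast cfQ_pos ha (n + 1)
  have hdet : (cfP a (n + 1) * cfQ a n - cfP a n * cfQ a (n + 1) : ℝ) = (-1) ^ n := by
    exact_mod_cast cfP_mul_cfQ_sub_cfP_mul_cfQ n
  rw [div_sub_div _ _ hq'.ne' hq.ne', mul_comm (cfQ a (n + 1) : ℝ) (cfP a n), hdet,
    mul_comm (cfQ a (n + 1) : ℝ), abs_div, abs_pow, abs_neg,
    abs_one, one_pow, abs_of_pos (by positivity)]

/-- The gaps `1 / (q_k q_{k+1})` between consecutive convergents at least halve at each step. -/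
lemma abs_sub_cfP_div_cfQ_le (ha : ∀ n, 1 ≤ n → 1 ≤ a n) {θ : ℝ}
    (hθ : Tendsto (fun n => (cfP a n : ℝ) / (cfQ a n : ℝ)) atTop (𝓝 θ)) (n : ℕ) :
    |θ - cfP a n / cfQ a n| ≤ 2 / (cfQ a n * cfQ a (n + 1)) := by
  rw [abs_sub_comm, ← Real.dist_eq]
  refine dist_le_of_le_geometric_two_of_tendsto₀
    (f := fun j => (cfP a (n + j) : ℝ) / cfQ a (n + j)) (fun j => ?_)
    (hθ.comp (tendsto_atTop_mono (Nat.le_add_left · n) tendsto_id))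
  have hpow : (2 : ℝ) ^ j * (cfQ a n * cfQ a (n + 1)) ≤ cfQ a (n + j) * cfQ a (n + j + 1) := by
    exact_mod_cast two_pow_mul_cfQ_mul_cfQ_succ_le ha n j
  rw [Real.dist_eq, abs_sub_comm, ← add_assoc, abs_cfP_div_cfQ_succ_sub ha, div_div, div_div,
    div_le_div_iff₀ (by have := cfQ_pos ha (n + j); have := cfQ_pos ha (n + j + 1); positivity)
      (by have := cfQ_pos ha n; have := cfQ_pos ha (n + 1); positivity)]
  nlinarith

lemma abs_sub_cfP_div_cfQ_le_two_div_mul_sq (ha : ∀ n, 1 ≤ n → 1 ≤ a n) {θ : ℝ}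
    (hθ : Tendsto (fun n => (cfP a n : ℝ) / (cfQ a n : ℝ)) atTop (𝓝 θ)) (n : ℕ) :
    |θ - cfP a n / cfQ a n| ≤ 2 / (a (n + 1) * cfQ a n ^ 2) := by
  have hq : (0 : ℝ) < cfQ a n := by exact_mod_cast cfQ_pos ha n
  have ha' : (0 : ℝ) < a (n + 1) := by exact_mod_cast ha (n + 1) n.succ_pos
  have hq' : (a (n + 1) * cfQ a n : ℝ) ≤ cfQ a (n + 1) := by exact_mod_cast mul_cfQ_le_cfQ_succ n
  refine (abs_sub_cfP_div_cfQ_le ha hθ n).trans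
    (div_le_div_of_nonneg_left zero_le_two (by positivity) ?_)
  nlinarith

lemma two_div_mul_sq_le_of_inv_le {A q m α : ℝ} (hA : 0 < A) (hq : 0 < q) (hm : 0 < m)
    (h : m⁻¹ ≤ A * q ^ (1 - α)) : 2 / (A * q ^ 2) ≤ 2 * m * q ^ (-(α + 1)) := by
  have h₁ : 1 ≤ A * q ^ (1 - α) * m := (inv_le_iff_one_le_mul₀ hm).mp h
  rw [show -(α + 1) = 1 - α - 2 by ring, Real.rpow_sub hq, Real.rpow_two,
    div_le_iff₀ (by positivity)]
  calc (2 : ℝ) ≤ 2 * (A * q ^ (1 - α) * m) := by linarith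
    _ = 2 * m * (q ^ (1 - α) / q ^ 2) * (A * q ^ 2) := by field_simp

lemma exists_frequently_abs_sub_cfP_div_cfQ_le_of_pos_Acf {θ α : ℝ}
    (ha : ∀ n, 1 ≤ n → 1 ≤ a n)
    (hθ : Tendsto (fun n => (cfP a n : ℝ) / (cfQ a n : ℝ)) atTop (𝓝 θ)) (hA : 0 < Acf a α) :
    ∃ m : ℕ, ∃ᶠ n in atTop, |θ - cfP a n / cfQ a n| ≤ m * (cfQ a n : ℝ) ^ (-(α + 1)) := by
  obtain ⟨m, hm⟩ := ENNReal.exists_inv_nat_lt hA.ne'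
  have hm0 : (0 : ℝ) < m := by
    rcases m.eq_zero_or_pos with rfl | h
    · simp at hm
    · exact_mod_cast h
  refine ⟨2 * m, (frequently_lt_of_lt_limsup (by isBoundedDefault) hm).mono fun n hn => ?_⟩
  have hq : (0 : ℝ) < cfQ a n := by exact_mod_cast cfQ_pos ha n
  have ha' : (0 : ℝ) < a (n + 1) := by exact_mod_cast ha (n + 1) n.succ_pos
  have hreal : (m : ℝ)⁻¹ < a (n + 1) * (cfQ a n : ℝ) ^ (1 - α) := by
    rwa [← ENNReal.ofReal_natCast, ← ENNReal.ofReal_natCast (cfQ a n),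
      ENNReal.ofReal_rpow_of_pos hq, ← ENNReal.ofReal_natCast (a (n + 1)),
      ← ENNReal.ofReal_mul (Nat.cast_nonneg _),
      ← ENNReal.ofReal_inv_of_pos hm0, ENNReal.ofReal_lt_ofReal_iff_of_nonneg (by positivity)] at hn
  push_cast
  exact (abs_sub_cfP_div_cfQ_le_two_div_mul_sq ha hθ n).trans
    (two_div_mul_sq_le_of_inv_le ha' hq hm0 hreal.le)

end Convergents

lemma mem_jarnik_of_frequently {β c x : ℝ} {p q : ℕ → ℕ} (hx : x ∈ Set.Icc 0 1)
    (hq : Tendsto q atTop atTop) (hq0 : ∀ n, 0 < q n)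
    (h : ∃ᶠ n in atTop, |x - p n / q n| ≤ c * (q n : ℝ) ^ (-β)) : x ∈ Jarnik β c := by
  refine ⟨hx, fun hfin => ?_⟩
  obtain ⟨B, hB⟩ := (hfin.image Prod.snd).bddAbove
  obtain ⟨n, hn, hnB⟩ := (h.and_eventually (hq.eventually_gt_atTop B)).exists
  exact (hB ⟨(p n, q n), ⟨hq0 n, hn⟩, rfl⟩).not_gt hnB

section JarnikUpperBound

variable {β c : ℝ}

lemma le_mul_of_abs_sub_div_le {x : ℝ} {p q : ℕ} (hx : x ∈ Set.Icc 0 1) (hβ : 0 ≤ β)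
    (hc : 0 ≤ c) (hq : 0 < q) (h : |x - p / q| ≤ c * (q : ℝ) ^ (-β)) :
    p ≤ (⌈c⌉₊ + 1) * q := by
  have hq' : (1 : ℝ) ≤ q := by exact_mod_cast hq
  have hpow : (q : ℝ) ^ (-β) ≤ 1 := Real.rpow_le_one_of_one_le_of_nonpos hq' (neg_nonpos.mpr hβ)
  have hdiv : (p : ℝ) / q ≤ ⌈c⌉₊ + 1 := by
    have := (abs_sub_le_iff.mp h).2
    have := Nat.le_ceil c
    nlinarith [hx.2]
  have : (p : ℝ) ≤ (⌈c⌉₊ + 1) * q := (div_le_iff₀ (by positivity)).mp hdiv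
  exact_mod_cast this

/-- The index `⟨k, p⟩` stands for the fraction `p / (k + Q)`. -/
def jarnikCover (β c : ℝ) (Q : ℕ) (i : Σ k : ℕ, Fin ((⌈c⌉₊ + 1) * (k + Q) + 1)) : Set ℝ :=
  Metric.closedBall ((i.2 : ℕ) / ((i.1 + Q : ℕ) : ℝ)) (c * ((i.1 + Q : ℕ) : ℝ) ^ (-β))

lemma jarnik_subset_iUnion_jarnikCover (hβ : 0 ≤ β) (hc : 0 ≤ c) (Q : ℕ) :
    Jarnik β c ⊆ ⋃ i, jarnikCover β c Q i := by
  rintro x ⟨hx, hinf⟩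
  obtain ⟨⟨p, q⟩, ⟨hq, hpq⟩, hQq⟩ : ∃ pq ∈ {pq : ℕ × ℕ | 0 < pq.2 ∧
      |x - (pq.1 : ℝ) / (pq.2 : ℝ)| ≤ c * (pq.2 : ℝ) ^ (-β)}, Q ≤ pq.2 := by
    by_contra! hlt
    refine hinf (((Set.finite_Iic ((⌈c⌉₊ + 1) * Q)).prod (Set.finite_Iic Q)).subset ?_)
    rintro ⟨p, q⟩ hpq
    have hqQ := hlt _ hpq
    exact ⟨(le_mul_of_abs_sub_div_le hx hβ hc hpq.1 hpq.2).trans (Nat.mul_le_mul_left _ hqQ.le),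
      hqQ.le⟩
  obtain ⟨k, rfl⟩ := Nat.exists_eq_add_of_le' hQq
  refine Set.mem_iUnion.mpr
    ⟨⟨k, p, Nat.lt_succ_of_le (le_mul_of_abs_sub_div_le hx hβ hc hq hpq)⟩, ?_⟩
  rwa [jarnikCover, Metric.mem_closedBall, Real.dist_eq]

lemma ediam_jarnikCover (Q : ℕ) (i : Σ k : ℕ, Fin ((⌈c⌉₊ + 1) * (k + Q) + 1)) :
    Metric.ediam (jarnikCover β c Q i) = ENNReal.ofReal (2 * c * ((i.1 + Q : ℕ) : ℝ) ^ (-β)) := by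
  rw [jarnikCover, Real.closedBall_eq_Icc, Real.ediam_Icc]
  ring_nf

lemma tsum_ediam_jarnikCover_rpow (hc : 0 ≤ c) {s : ℝ} (hs : 0 ≤ s) (Q : ℕ) :
    ∑' i, Metric.ediam (jarnikCover β c Q i) ^ s = ∑' k : ℕ, ENNReal.ofReal
      (((⌈c⌉₊ + 1) * (k + Q) + 1 : ℕ) * (2 * c * ((k + Q : ℕ) : ℝ) ^ (-β)) ^ s) := by
  rw [ENNReal.tsum_sigma']
  refine tsum_congr fun k => ?_
  simp only [ediam_jarnikCover, tsum_fintype, Finset.sum_const, Finset.card_univ, Fintype.card_fin,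
    nsmul_eq_mul]
  rw [ENNReal.ofReal_rpow_of_nonneg (by positivity) hs, ENNReal.ofReal_mul (Nat.cast_nonneg _),
    ENNReal.ofReal_natCast]

lemma natCast_mul_rpow_le (hc : 0 ≤ c) {s : ℝ} {q : ℕ} (hq : 0 < q) :
    (((⌈c⌉₊ + 1) * q + 1 : ℕ) : ℝ) * (2 * c * (q : ℝ) ^ (-β)) ^ s
      ≤ (⌈c⌉₊ + 2) * (2 * c) ^ s * (q : ℝ) ^ (1 - β * s) := by
  have hq' : (1 : ℝ) ≤ q := by exact_mod_cast hq
  have hcount : (((⌈c⌉₊ + 1) * q + 1 : ℕ) : ℝ) ≤ (⌈c⌉₊ + 2) * q := by push_cast; nlinarith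
  rw [Real.mul_rpow (by positivity) (by positivity), ← Real.rpow_mul (by positivity),
    show 1 - β * s = 1 + -β * s by ring, Real.rpow_add (by positivity), Real.rpow_one]
  calc (((⌈c⌉₊ + 1) * q + 1 : ℕ) : ℝ) * ((2 * c) ^ s * (q : ℝ) ^ (-β * s))
      ≤ (⌈c⌉₊ + 2) * q * ((2 * c) ^ s * (q : ℝ) ^ (-β * s)) := by gcongr
    _ = (⌈c⌉₊ + 2) * (2 * c) ^ s * (q * (q : ℝ) ^ (-β * s)) := by ring

lemma hausdorffMeasure_jarnik_eq_zero (hβ : 2 < β) (hc : 0 ≤ c) {s : ℝ} (hs : 2 / β < s) :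
    μH[s] (Jarnik β c) = 0 := by
  have hβ0 : 0 < β := by linarith
  have hs0 : 0 < s := (div_pos two_pos hβ0).trans hs
  have hβs : 1 - β * s < -1 := by rw [div_lt_iff₀ hβ0] at hs; linarith
  set g : ℕ → ℝ := fun q => (⌈c⌉₊ + 2) * (2 * c) ^ s * (q : ℝ) ^ (1 - β * s)
  have hg : ∑' q, ENNReal.ofReal (g q) ≠ ∞ := by
    rw [← ENNReal.ofReal_tsum_of_nonneg (fun q => by positivity)
      ((Real.summable_nat_rpow.mpr hβs).mul_left _)]
    exact ENNReal.ofReal_ne_top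
  have hradius : Tendsto (fun Q : ℕ => ENNReal.ofReal (2 * c * (Q : ℝ) ^ (-β))) atTop (𝓝 0) := by
    simpa using ENNReal.tendsto_ofReal
      (((tendsto_rpow_neg_atTop hβ0).comp tendsto_natCast_atTop_atTop).const_mul (2 * c))
  have hdiam : ∀ᶠ Q : ℕ in atTop, ∀ i,
      Metric.ediam (jarnikCover β c Q i) ≤ ENNReal.ofReal (2 * c * (Q : ℝ) ^ (-β)) := by
    filter_upwards [eventually_ge_atTop 1] with Q hQ i
    rw [ediam_jarnikCover]
    refine ENNReal.ofReal_le_ofReal (mul_le_mul_of_nonneg_left ?_ (by positivity))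
    exact Real.rpow_le_rpow_of_nonpos (by positivity) (by push_cast; linarith)
      (neg_nonpos.mpr hβ0.le)
  have hcost : ∀ᶠ Q : ℕ in atTop, ∑' i, Metric.ediam (jarnikCover β c Q i) ^ s
      ≤ ∑' k, ENNReal.ofReal (g (k + Q)) := by
    filter_upwards [eventually_ge_atTop 1] with Q hQ
    rw [tsum_ediam_jarnikCover_rpow hc hs0.le]
    exact ENNReal.tsum_le_tsum fun k =>
      ENNReal.ofReal_le_ofReal (natCast_mul_rpow_le hc (by omega))
  refine le_antisymm ?_ zero_le
  calc μH[s] (Jarnik β c)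
      ≤ liminf (fun Q => ∑' i, Metric.ediam (jarnikCover β c Q i) ^ s) atTop :=
        Measure.hausdorffMeasure_le_liminf_tsum s _ _ hradius _ hdiam
          (Eventually.of_forall (jarnik_subset_iUnion_jarnikCover hβ0.le hc))
    _ ≤ liminf (fun Q => ∑' k, ENNReal.ofReal (g (k + Q))) atTop := liminf_le_liminf hcost
    _ = 0 := (ENNReal.tendsto_sum_nat_add _ hg).liminf_eq

lemma dimH_jarnik_le (hβ : 2 < β) (hc : 0 ≤ c) : dimH (Jarnik β c) ≤ ENNReal.ofReal (2 / β) := by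
  refine dimH_le fun d hd => ?_
  by_contra! hlt
  have hd' : 2 / β < d := (ENNReal.ofReal_lt_coe_iff (by positivity)).mp hlt
  simp [hausdorffMeasure_jarnik_eq_zero hβ hc hd'] at hd

end JarnikUpperBound

/-- `Θ̲_α` is contained in the countable union of Jarník sets
`J_{α+1}^m`, and consequently `dim_H(Θ̲_α) ≤ 2/(α+1)`. -/
theorem stmt15 (α : ℝ) (hα : 1 < α) :
    ({θ : ℝ | θ ∈ Set.Icc (0:ℝ) 1 ∧ ∃ a, IsCF θ a ∧ 0 < Acf a α} ⊆
      ⋃ m : ℕ, Jarnik (α + 1) (m : ℝ)) ∧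
    dimH {θ : ℝ | θ ∈ Set.Icc (0:ℝ) 1 ∧ ∃ a, IsCF θ a ∧ 0 < Acf a α} ≤
      ENNReal.ofReal (2 / (α + 1)) := by
  have hsub : {θ : ℝ | θ ∈ Set.Icc (0:ℝ) 1 ∧ ∃ a, IsCF θ a ∧ 0 < Acf a α} ⊆
      ⋃ m : ℕ, Jarnik (α + 1) (m : ℝ) := by
    rintro θ ⟨hθ, a, ⟨-, ha, hconv⟩, hA⟩
    obtain ⟨m, hm⟩ := exists_frequently_abs_sub_cfP_div_cfQ_le_of_pos_Acf ha hconv hA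
    exact Set.mem_iUnion.mpr
      ⟨m, mem_jarnik_of_frequently hθ (tendsto_cfQ_atTop ha) (cfQ_pos ha) hm⟩
  refine ⟨hsub, (dimH_mono hsub).trans ?_⟩
  rw [dimH_iUnion]
  exact iSup_le fun m => dimH_jarnik_le (by linarith) m.cast_nonneg

end CFPaper
end
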